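/- arXiv:1208.6454 — 3 statements merged into one kernel-verified Lean document; each statement's English description precedes it below -/
import Mathlib

section
/- Let d_0 ∈ (0,1], Γ ∈ [0,1) and r = 1 - Γ + Γ d_0. Then the pair of functions b(t) = (d_0/r)(1 - e^{-r t}) and d(t) = d_0 e^{-r t} is a solution on [0,∞) of the ODE system b' = d, d' = (Γ d / (1 - Γ b))(1 - b - d) - d with initial conditions b(0) = 0, d(0) = d_0. -/
/-- Fluid limit of the HILT model with uniform threshold distribution:
the explicit functions `b(t) = (d₀/r)(1 - e^{-rt})`, `d(t) = d₀ e^{-rt}` with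
`r = 1 - Γ + Γ d₀` solve the ODE system `b' = d`,
`d' = (Γ d / (1 - Γ b))(1 - b - d) - d` on `[0,∞)` with `b 0 = 0`, `d 0 = d₀`,
and `1 - Γ b(t) > 0` throughout so the system is well defined. -/
theorem stmt2 (Γ d0 r : ℝ) (hΓ : Γ ∈ Set.Ico (0:ℝ) 1) (hd0 : d0 ∈ Set.Ioc (0:ℝ) 1)
    (hr : r = 1 - Γ + Γ * d0)
    (b d : ℝ → ℝ)
    (hb : ∀ t, b t = d0 / r * (1 - Real.exp (-r * t)))
    (hd : ∀ t, d t = d0 * Real.exp (-r * t)) :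
    b 0 = 0 ∧ d 0 = d0 ∧
      ∀ t ∈ Set.Ici (0:ℝ),
        0 < 1 - Γ * b t ∧
        HasDerivAt b (d t) t ∧
        HasDerivAt d (Γ * d t / (1 - Γ * b t) * (1 - b t - d t) - d t) t := by
  obtain ⟨hΓ0, hΓ1⟩ := hΓ
  obtain ⟨hd01, hd02⟩ := hd0
  have hr0 : 0 < r := by nlinarith
  refine ⟨by simp [hb], by simp [hd], ?_⟩
  intro t ht
  have hE0 : 0 < Real.exp (-r * t) := Real.exp_pos _
  have hE1 : Real.exp (-r * t) ≤ 1 := by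
    apply Real.exp_le_one_iff.mpr
    nlinarith [Set.mem_Ici.mp ht]
  have hΓd0r : Γ * d0 ≤ r := by nlinarith
  have hpos : 0 < 1 - Γ * b t := by
    rw [hb]
    have h1 : Γ * d0 * (1 - Real.exp (-r * t)) < r := by nlinarith
    have : Γ * (d0 / r * (1 - Real.exp (-r * t))) = Γ * d0 * (1 - Real.exp (-r * t)) / r := by
      ring
    rw [this]
    rw [sub_pos]
    exact (div_lt_one hr0).mpr h1
  have hExp : ∀ s : ℝ, HasDerivAt (fun u => Real.exp (-r * u)) (-r * Real.exp (-r * s)) s := by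
    intro s
    have h1 : HasDerivAt (fun u : ℝ => -r * u) (-r) s := by
      simpa using (hasDerivAt_id s).const_mul (-r)
    simpa [Function.comp_def, mul_comm] using (Real.hasDerivAt_exp (-r * s)).comp s h1
  have hbderiv : HasDerivAt b (d t) t := by
    have h1 : HasDerivAt (fun u => d0 / r * (1 - Real.exp (-r * u)))
        (d0 / r * (0 - (-r * Real.exp (-r * t)))) t :=
      (((hasDerivAt_const t (1:ℝ)).sub (hExp t)).const_mul _)
    have heq : b = fun u => d0 / r * (1 - Real.exp (-r * u)) := funext hb
    rw [heq, hd]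
    convert h1 using 1
    field_simp
    ring
  have hdderiv : HasDerivAt d (Γ * d t / (1 - Γ * b t) * (1 - b t - d t) - d t) t := by
    have h1 : HasDerivAt (fun u => d0 * Real.exp (-r * u)) (d0 * (-r * Real.exp (-r * t))) t :=
      (hExp t).const_mul d0
    have heq : d = fun u => d0 * Real.exp (-r * u) := funext hd
    rw [heq]
    convert h1 using 1
    have hne : (1 - Γ * b t) ≠ 0 := ne_of_gt hpos
    beta_reduce
    rw [div_mul_eq_mul_div, sub_eq_iff_eq_add, div_eq_iff hne]
    rw [hb] at hne ⊢
    rw [hr] at *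
    field_simp
    ring
  exact ⟨hpos, hbderiv, hdderiv⟩
end

section
/- Fix Γ ∈ [0,1), T > 0, and β ∈ (0,1). Define H(d_0) = e^{-(1-Γ)T} e^{-Γ d_0 T} and G(d_0) = (1 - β(1-Γ)/d_0 - Γβ)/(Γ(1 - d_0)) for d_0 ∈ (β(1-Γ)/(1-βΓ), 1) and Γ ∈ (0,1). Then H is strictly decreasing, G is strictly increasing on this interval, and hence there is at most one d_0 in the interval satisfying H(d_0) = G(d_0). -/
/-- For `Γ ∈ (0,1)`, `T > 0`, `β ∈ (0,1)`: on the interval `(β(1-Γ)/(1-βΓ), 1)`,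
`H(d₀) = e^{-(1-Γ)T} e^{-Γ d₀ T}` is strictly decreasing,
`G(d₀) = (1 - β(1-Γ)/d₀ - Γβ)/(Γ(1-d₀))` is strictly increasing, and hence there is at
most one `d₀` in the interval with `H(d₀) = G(d₀)`. -/
theorem stmt8 (Γ T β : ℝ) (hΓ : Γ ∈ Set.Ioo (0:ℝ) 1) (hT : 0 < T)
    (hβ : β ∈ Set.Ioo (0:ℝ) 1)
    (H G : ℝ → ℝ)
    (hH : ∀ d0, H d0 = Real.exp (-(1 - Γ) * T) * Real.exp (-Γ * d0 * T))
    (hG : ∀ d0, G d0 = (1 - β * (1 - Γ) / d0 - Γ * β) / (Γ * (1 - d0))) :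
    StrictAntiOn H (Set.Ioo (β * (1 - Γ) / (1 - β * Γ)) 1) ∧
    StrictMonoOn G (Set.Ioo (β * (1 - Γ) / (1 - β * Γ)) 1) ∧
    ∀ x ∈ Set.Ioo (β * (1 - Γ) / (1 - β * Γ)) 1,
      ∀ y ∈ Set.Ioo (β * (1 - Γ) / (1 - β * Γ)) 1,
        H x = G x → H y = G y → x = y := by
  obtain ⟨hΓ0, hΓ1⟩ := hΓ
  obtain ⟨hβ0, hβ1⟩ := hβ
  have hden : 0 < 1 - β * Γ := by nlinarith
  have hlo : 0 < β * (1 - Γ) / (1 - β * Γ) := by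
    apply div_pos _ hden; nlinarith
  -- key facts for points in interval
  have key : ∀ a ∈ Set.Ioo (β * (1 - Γ) / (1 - β * Γ)) 1,
      0 < a ∧ a < 1 ∧ β * (1 - Γ) < a * (1 - β * Γ) := by
    intro a ⟨ha1, ha2⟩
    have h0 : 0 < a := lt_trans hlo ha1
    exact ⟨h0, ha2, (div_lt_iff₀ hden).mp ha1⟩
  have hanti : StrictAntiOn H (Set.Ioo (β * (1 - Γ) / (1 - β * Γ)) 1) := by
    intro a ha b hb hab
    rw [hH, hH]
    have : Real.exp (-Γ * b * T) < Real.exp (-Γ * a * T) := by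
      apply Real.exp_lt_exp.mpr
      nlinarith [mul_pos (mul_pos hΓ0 hT) (sub_pos.mpr hab)]
    exact mul_lt_mul_of_pos_left this (Real.exp_pos _)
  have hmono : StrictMonoOn G (Set.Ioo (β * (1 - Γ) / (1 - β * Γ)) 1) := by
    intro a ha b hb hab
    obtain ⟨ha0, ha1, haK⟩ := key a ha
    obtain ⟨hb0, hb1, hbK⟩ := key b hb
    rw [hG, hG]
    rw [div_lt_div_iff₀ (by nlinarith) (by nlinarith)]
    have h1 : (1 - β * (1 - Γ) / a - Γ * β) = ((1 - β * Γ) * a - β * (1 - Γ)) / a := by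
      field_simp; ring
    have h2 : (1 - β * (1 - Γ) / b - Γ * β) = ((1 - β * Γ) * b - β * (1 - Γ)) / b := by
      field_simp; ring
    rw [h1, h2, div_mul_eq_mul_div, div_mul_eq_mul_div,
      div_lt_div_iff₀ ha0 hb0]
    have hpos : 0 < Γ * (b - a) *
        (β * (1 - Γ) * (1 - a) + b * (a * (1 - β * Γ) - β * (1 - Γ))) := by
      apply mul_pos (mul_pos hΓ0 (by linarith))
      have h3 := mul_pos hb0 (sub_pos.mpr haK)
      nlinarith [mul_pos (mul_pos hβ0 (show (0:ℝ) < 1 - Γ by linarith))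
        (show (0:ℝ) < 1 - a by linarith)]
    nlinarith [hpos]
  refine ⟨hanti, hmono, ?_⟩
  intro x hx y hy hxe hye
  rcases lt_trichotomy x y with h | h | h
  · exfalso
    have h1 := hanti hx hy h
    have h2 := hmono hx hy h
    rw [hxe, hye] at h1
    exact absurd h1 (not_lt.mpr h2.le)
  · exact h
  · exfalso
    have h1 := hanti hy hx h
    have h2 := hmono hy hx h
    rw [hxe, hye] at h1
    exact absurd h1 (not_lt.mpr h2.le)
end

section
/- For the SIR-SI fluid system with two controls σ¹(t) ≥ σ²(t) for all t and equal initial conditions (x_b, x_d, y)(0), the corresponding trajectories satisfy x_b¹(t) ≥ x_b²(t), x_d¹(t) ≥ x_d²(t), and y¹(t) ≥ y²(t) for all t ≥ 0. -/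
/-!
The difference `u = (x_b¹ - x_b², x_d¹ - x_d², y¹ - y²)` of the two trajectories obeys a
cooperative system: inside the invariant region each drift is nondecreasing in the other two
coordinates, Lipschitz in its own, and `σ¹ ≥ σ²` only helps `y`. Hence whenever one coordinate
of `u` equals `-a` while all are `≥ -a`, its drift is `≥ -K a`. Adding `ε e^{(K+1)t}` to every
coordinate makes the drift at such a contact strictly positive, so the perturbed differences
cannot leave the nonnegative orthant, and letting `ε → 0` gives `u ≥ 0`.
-/

open Set Filter Topology Real

theorem HasDerivAt.eventually_lt_nhdsGT {f : ℝ → ℝ} {f' x : ℝ} (hf : HasDerivAt f f' x)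
    (hf' : 0 < f') : ∀ᶠ y in 𝓝[>] x, f x < f y := by
  filter_upwards [(hasDerivAt_iff_tendsto_slope_left_right.mp hf).2.eventually
    (lt_mem_nhds hf'), self_mem_nhdsWithin] with y hslope hxy
  rw [slope_def_field, div_pos_iff_of_pos_right (sub_pos.2 hxy)] at hslope
  exact sub_pos.mp hslope

theorem nonneg_of_hasDerivAt_of_pos_at_contact {ι : Type*} [Finite ι] {w L : ι → ℝ → ℝ}
    (hw : ∀ i, ∀ t ∈ Ici (0 : ℝ), HasDerivAt (w i) (L i t) t)
    (hcontact : ∀ i, ∀ t ∈ Ici (0 : ℝ), (∀ j, 0 ≤ w j t) → w i t = 0 → 0 < L i t)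
    (h0 : ∀ i, 0 ≤ w i 0) {t : ℝ} (ht : 0 ≤ t) (i : ι) : 0 ≤ w i t := by
  set s := {τ | ∀ j, 0 ≤ w j τ}
  have hclosed : IsClosed (s ∩ Icc 0 t) := by
    have hcont : ContinuousOn (fun τ j ↦ w j τ) (Icc 0 t) :=
      continuousOn_pi.2 fun j x hx ↦ (hw j x hx.1).continuousAt.continuousWithinAt
    rw [inter_comm]
    exact hcont.preimage_isClosed_of_isClosed isClosed_Icc isClosed_Ici
  have hstep : ∀ x ∈ s ∩ Ico 0 t, s ∈ 𝓝[>] x := by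
    rintro x ⟨hx, hx0, -⟩
    refine eventually_all.2 fun j ↦ ?_
    rcases (hx j).eq_or_lt with hzero | hpos
    · filter_upwards [(hw j x hx0).eventually_lt_nhdsGT (hcontact j x hx0 hx hzero.symm)]
        with y hy
      exact hzero.le.trans hy.le
    · exact nhdsWithin_le_nhds <|
        (hw j x hx0).continuousAt.eventually (eventually_ge_nhds hpos)
  exact hclosed.Icc_subset_of_forall_mem_nhdsWithin h0 hstep ⟨ht, le_rfl⟩ i

theorem nonneg_of_hasDerivAt_of_contact_ge {ι : Type*} [Finite ι] {u D : ι → ℝ → ℝ} (K : ℝ)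
    (hu : ∀ i, ∀ t ∈ Ici (0 : ℝ), HasDerivAt (u i) (D i t) t)
    (hcontact : ∀ i, ∀ t ∈ Ici (0 : ℝ), ∀ a, 0 < a → (∀ j, -a ≤ u j t) → u i t = -a →
      -(K * a) ≤ D i t)
    (h0 : ∀ i, 0 ≤ u i 0) {t : ℝ} (ht : 0 ≤ t) (i : ι) : 0 ≤ u i t := by
  refine le_of_forall_pos_le_add fun ε hε ↦ ?_
  set E : ℝ → ℝ := fun s ↦ ε * exp (-(K + 1) * t) * exp ((K + 1) * s) with hE
  have hEpos : ∀ s, 0 < E s := fun s ↦ by positivity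
  have hEt : E t = ε := by
    simp only [hE, mul_assoc, ← exp_add, neg_mul, neg_add_cancel, exp_zero, mul_one]
  have hE' : ∀ s, HasDerivAt E ((K + 1) * E s) s := fun s ↦ by
    refine (((hasDerivAt_id s).const_mul (K + 1)).exp.const_mul
      (ε * exp (-(K + 1) * t))).congr_deriv ?_
    simp only [hE, id]
    ring
  have key := nonneg_of_hasDerivAt_of_pos_at_contact (w := fun j s ↦ u j s + E s)
    (L := fun j s ↦ D j s + (K + 1) * E s) (fun j s hs ↦ (hu j s hs).add (hE' s))
    (fun j s hs hall hzero ↦ by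
      have := hcontact j s hs (E s) (hEpos s) (fun k ↦ by linarith [hall k]) (by linarith)
      linarith [hEpos s])
    (fun j ↦ by linarith [h0 j, hEpos 0]) ht i
  simpa only [hEt] using key

theorem neg_le_mul_of_nonneg_of_le_one {c v m : ℝ} (hc₀ : 0 ≤ c) (hc₁ : c ≤ 1) (hm : 0 ≤ m)
    (hv : -m ≤ v) : -m ≤ c * v := by
  nlinarith

namespace SIRSI

def driftXb (β lam b xb xd y : ℝ) : ℝ :=
  β * xd + lam * (b - xb) * (xb + xd + y)

def driftXd (β lam Γ b d xb xd y : ℝ) : ℝ :=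
  Γ * lam * (d - xd) * y + Γ * lam * xd * (1 - b - d) + lam * (d - xd) * (xb + xd + y) - β * xd

def driftY (lam Γ σ b d xb xd y : ℝ) : ℝ :=
  -(Γ * lam * d * y) + lam * σ * ((1 - b - d) - y) * (xb + y + (1 - Γ) * xd)

def Region (b d xb xd y : ℝ) : Prop :=
  0 ≤ xb ∧ xb ≤ b ∧ 0 ≤ xd ∧ xd ≤ d ∧ 0 ≤ y ∧ y ≤ 1 - b - d

variable {β lam Γ σ₁ σ₂ a b d xb₁ xd₁ y₁ xb₂ xd₂ y₂ : ℝ}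

theorem driftXb_sub_ge (hβ : 0 ≤ β) (hlam : 0 ≤ lam) (ha : 0 ≤ a)
    (h₁ : Region b d xb₁ xd₁ y₁) (h₂ : Region b d xb₂ xd₂ y₂)
    (hxb : xb₁ - xb₂ = -a) (hxd : -a ≤ xd₁ - xd₂) (hy : -a ≤ y₁ - y₂) :
    -((β + 3 * lam) * a) ≤ driftXb β lam b xb₁ xd₁ y₁ - driftXb β lam b xb₂ xd₂ y₂ := by
  obtain ⟨hxb₁, hxb₁b, hxd₁, hxd₁d, hy₁, hy₁s⟩ := h₁
  obtain ⟨hxb₂, -, hxd₂, -, hy₂, -⟩ := h₂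
  have hdecomp : driftXb β lam b xb₁ xd₁ y₁ - driftXb β lam b xb₂ xd₂ y₂ =
      β * (xd₁ - xd₂) + lam * ((b - xb₁) * ((xb₁ - xb₂) + (xd₁ - xd₂) + (y₁ - y₂))) +
        lam * a * (xb₂ + xd₂ + y₂) := by
    obtain rfl : a = xb₂ - xb₁ := by linarith
    unfold driftXb
    ring
  have hmass : -(3 * a) ≤ (b - xb₁) * ((xb₁ - xb₂) + (xd₁ - xd₂) + (y₁ - y₂)) :=
    neg_le_mul_of_nonneg_of_le_one (by linarith) (by linarith) (by linarith) (by linarith)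
  rw [hdecomp]
  linarith [mul_le_mul_of_nonneg_left hxd hβ, mul_le_mul_of_nonneg_left hmass hlam,
    mul_nonneg (mul_nonneg hlam ha) (by linarith : 0 ≤ xb₂ + xd₂ + y₂)]

theorem driftXd_sub_ge (hβ : 0 ≤ β) (hlam : 0 ≤ lam) (hΓ₀ : 0 ≤ Γ) (hΓ₁ : Γ ≤ 1) (ha : 0 ≤ a)
    (h₁ : Region b d xb₁ xd₁ y₁) (h₂ : Region b d xb₂ xd₂ y₂)
    (hxb : -a ≤ xb₁ - xb₂) (hxd : xd₁ - xd₂ = -a) (hy : -a ≤ y₁ - y₂) :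
    -(5 * lam * a) ≤ driftXd β lam Γ b d xb₁ xd₁ y₁ - driftXd β lam Γ b d xb₂ xd₂ y₂ := by
  obtain ⟨hxb₁, hxb₁b, hxd₁, hxd₁d, hy₁, hy₁s⟩ := h₁
  obtain ⟨hxb₂, -, hxd₂, -, hy₂, -⟩ := h₂
  have hdecomp : driftXd β lam Γ b d xb₁ xd₁ y₁ - driftXd β lam Γ b d xb₂ xd₂ y₂ =
      Γ * lam * ((d - xd₁) * (y₁ - y₂)) + Γ * lam * a * y₂ - Γ * lam * ((1 - b - d) * a) +
        lam * ((d - xd₁) * ((xb₁ - xb₂) + (xd₁ - xd₂) + (y₁ - y₂))) +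
        lam * a * (xb₂ + xd₂ + y₂) + β * a := by
    obtain rfl : a = xd₂ - xd₁ := by linarith
    unfold driftXd
    ring
  have hy' : -a ≤ (d - xd₁) * (y₁ - y₂) :=
    neg_le_mul_of_nonneg_of_le_one (by linarith) (by linarith) ha hy
  have hmass : -(3 * a) ≤ (d - xd₁) * ((xb₁ - xb₂) + (xd₁ - xd₂) + (y₁ - y₂)) :=
    neg_le_mul_of_nonneg_of_le_one (by linarith) (by linarith) (by linarith) (by linarith)
  have hs : (1 - b - d) * a ≤ a := mul_le_of_le_one_left ha (by linarith)
  have hΓlam : 0 ≤ Γ * lam := mul_nonneg hΓ₀ hlam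
  rw [hdecomp]
  linarith [mul_le_mul_of_nonneg_left hy' hΓlam, mul_le_mul_of_nonneg_left hs hΓlam,
    mul_le_mul_of_nonneg_left hmass hlam, mul_nonneg (mul_nonneg hΓlam ha) hy₂,
    mul_nonneg (mul_nonneg hlam ha) (by linarith : 0 ≤ xb₂ + xd₂ + y₂), mul_nonneg hβ ha,
    mul_nonneg (mul_nonneg (sub_nonneg.2 hΓ₁) hlam) ha]

theorem driftY_sub_ge (hlam : 0 ≤ lam) (hΓ₀ : 0 ≤ Γ) (hΓ₁ : Γ ≤ 1) (hσ₂₀ : 0 ≤ σ₂)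
    (hσ₂₁ : σ₂ ≤ 1) (hσ : σ₂ ≤ σ₁) (ha : 0 ≤ a)
    (h₁ : Region b d xb₁ xd₁ y₁) (h₂ : Region b d xb₂ xd₂ y₂)
    (hxb : -a ≤ xb₁ - xb₂) (hxd : -a ≤ xd₁ - xd₂) (hy : y₁ - y₂ = -a) :
    -(3 * lam * a) ≤ driftY lam Γ σ₁ b d xb₁ xd₁ y₁ - driftY lam Γ σ₂ b d xb₂ xd₂ y₂ := by
  obtain ⟨hxb₁, hxb₁b, hxd₁, hxd₁d, hy₁, hy₁s⟩ := h₁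
  obtain ⟨hxb₂, -, hxd₂, -, hy₂, -⟩ := h₂
  have hdecomp : driftY lam Γ σ₁ b d xb₁ xd₁ y₁ - driftY lam Γ σ₂ b d xb₂ xd₂ y₂ =
      Γ * lam * d * a +
        lam * (σ₁ - σ₂) * ((1 - b - d - y₁) * (xb₁ + y₁ + (1 - Γ) * xd₁)) +
        lam * σ₂ * ((1 - b - d - y₁) *
          ((xb₁ - xb₂) + (y₁ - y₂) + (1 - Γ) * (xd₁ - xd₂))) +
        lam * σ₂ * a * (xb₂ + y₂ + (1 - Γ) * xd₂) := by
    obtain rfl : a = y₂ - y₁ := by linarith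
    unfold driftY
    ring
  have hΓ' : 0 ≤ 1 - Γ := sub_nonneg.2 hΓ₁
  have hforce : -(3 * a) ≤ (xb₁ - xb₂) + (y₁ - y₂) + (1 - Γ) * (xd₁ - xd₂) := by
    linarith [neg_le_mul_of_nonneg_of_le_one hΓ' (by linarith) ha hxd]
  have hforce' : -(3 * a) ≤ (1 - b - d - y₁) *
      ((xb₁ - xb₂) + (y₁ - y₂) + (1 - Γ) * (xd₁ - xd₂)) :=
    neg_le_mul_of_nonneg_of_le_one (by linarith) (by linarith) (by linarith) hforce
  rw [hdecomp]
  linarith [mul_nonneg (mul_nonneg (mul_nonneg hΓ₀ hlam) (by linarith : 0 ≤ d)) ha,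
    mul_nonneg (mul_nonneg hlam (sub_nonneg.2 hσ))
      (mul_nonneg (by linarith : 0 ≤ 1 - b - d - y₁)
        (by linarith [mul_nonneg hΓ' hxd₁] : 0 ≤ xb₁ + y₁ + (1 - Γ) * xd₁)),
    mul_le_mul_of_nonneg_left hforce' (mul_nonneg hlam hσ₂₀),
    mul_nonneg (mul_nonneg (mul_nonneg hlam hσ₂₀) ha)
      (by linarith [mul_nonneg hΓ' hxd₂] : 0 ≤ xb₂ + y₂ + (1 - Γ) * xd₂),
    mul_nonneg (mul_nonneg hlam (sub_nonneg.2 hσ₂₁)) ha]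

end SIRSI

open SIRSI in
theorem stmt16_general (β lam Γ : ℝ) (hβ : 0 < β) (hlam : 0 < lam) (hΓ : Γ ∈ Set.Icc (0:ℝ) 1)
    (σ1 σ2 : ℝ → ℝ)
    (hσ2 : ∀ t, σ2 t ∈ Set.Icc (0:ℝ) 1)
    (hσle : ∀ t, σ2 t ≤ σ1 t)
    (b d : ℝ → ℝ)
    (xb1 xd1 y1 xb2 xd2 y2 : ℝ → ℝ)
    (hxb1 : ∀ t ∈ Set.Ici (0:ℝ),
      HasDerivAt xb1 (β * xd1 t + lam * (b t - xb1 t) * (xb1 t + xd1 t + y1 t)) t)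
    (hxd1 : ∀ t ∈ Set.Ici (0:ℝ),
      HasDerivAt xd1 (Γ * lam * (d t - xd1 t) * y1 t + Γ * lam * xd1 t * (1 - b t - d t) +
        lam * (d t - xd1 t) * (xb1 t + xd1 t + y1 t) - β * xd1 t) t)
    (hy1 : ∀ t ∈ Set.Ici (0:ℝ),
      HasDerivAt y1 (-(Γ * lam * d t * y1 t) +
        lam * σ1 t * ((1 - b t - d t) - y1 t) * (xb1 t + y1 t + (1 - Γ) * xd1 t)) t)
    (hxb2 : ∀ t ∈ Set.Ici (0:ℝ),
      HasDerivAt xb2 (β * xd2 t + lam * (b t - xb2 t) * (xb2 t + xd2 t + y2 t)) t)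
    (hxd2 : ∀ t ∈ Set.Ici (0:ℝ),
      HasDerivAt xd2 (Γ * lam * (d t - xd2 t) * y2 t + Γ * lam * xd2 t * (1 - b t - d t) +
        lam * (d t - xd2 t) * (xb2 t + xd2 t + y2 t) - β * xd2 t) t)
    (hy2 : ∀ t ∈ Set.Ici (0:ℝ),
      HasDerivAt y2 (-(Γ * lam * d t * y2 t) +
        lam * σ2 t * ((1 - b t - d t) - y2 t) * (xb2 t + y2 t + (1 - Γ) * xd2 t)) t)
    (hregion1 : ∀ t ∈ Set.Ici (0:ℝ),
      0 ≤ xb1 t ∧ xb1 t ≤ b t ∧ 0 ≤ xd1 t ∧ xd1 t ≤ d t ∧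
      0 ≤ y1 t ∧ y1 t ≤ 1 - b t - d t)
    (hregion2 : ∀ t ∈ Set.Ici (0:ℝ),
      0 ≤ xb2 t ∧ xb2 t ≤ b t ∧ 0 ≤ xd2 t ∧ xd2 t ≤ d t ∧
      0 ≤ y2 t ∧ y2 t ≤ 1 - b t - d t)
    (hinit : xb1 0 = xb2 0 ∧ xd1 0 = xd2 0 ∧ y1 0 = y2 0) :
    ∀ t ∈ Set.Ici (0:ℝ), xb2 t ≤ xb1 t ∧ xd2 t ≤ xd1 t ∧ y2 t ≤ y1 t := by
  intro t ht
  have hcmp := nonneg_of_hasDerivAt_of_contact_ge (β + 5 * lam)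
    (u := ![fun s ↦ xb1 s - xb2 s, fun s ↦ xd1 s - xd2 s, fun s ↦ y1 s - y2 s])
    (D := ![fun s ↦ driftXb β lam (b s) (xb1 s) (xd1 s) (y1 s) -
        driftXb β lam (b s) (xb2 s) (xd2 s) (y2 s),
      fun s ↦ driftXd β lam Γ (b s) (d s) (xb1 s) (xd1 s) (y1 s) -
        driftXd β lam Γ (b s) (d s) (xb2 s) (xd2 s) (y2 s),
      fun s ↦ driftY lam Γ (σ1 s) (b s) (d s) (xb1 s) (xd1 s) (y1 s) -
        driftY lam Γ (σ2 s) (b s) (d s) (xb2 s) (xd2 s) (y2 s)])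
    (fun i s hs ↦ by
      fin_cases i
      exacts [(hxb1 s hs).sub (hxb2 s hs), (hxd1 s hs).sub (hxd2 s hs),
        (hy1 s hs).sub (hy2 s hs)])
    (fun i s hs a ha hall heq ↦ by
      have hxb : -a ≤ xb1 s - xb2 s := hall 0
      have hxd : -a ≤ xd1 s - xd2 s := hall 1
      have hy : -a ≤ y1 s - y2 s := hall 2
      have hlam_a := mul_nonneg hlam.le ha.le
      have hβ_a := mul_nonneg hβ.le ha.le
      have h₁ : Region (b s) (d s) (xb1 s) (xd1 s) (y1 s) := hregion1 s hs
      have h₂ : Region (b s) (d s) (xb2 s) (xd2 s) (y2 s) := hregion2 s hs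
      fin_cases i
      · exact (driftXb_sub_ge hβ.le hlam.le ha.le h₁ h₂ heq hxd hy).trans' (by linarith)
      · exact (driftXd_sub_ge hβ.le hlam.le hΓ.1 hΓ.2 ha.le h₁ h₂ hxb heq hy).trans'
          (by linarith)
      · exact (driftY_sub_ge hlam.le hΓ.1 hΓ.2 (hσ2 s).1 (hσ2 s).2 (hσle s) ha.le h₁ h₂
          hxb hxd heq).trans' (by linarith))
    (fun i ↦ by fin_cases i <;> simp [hinit]) ht
  exact ⟨sub_nonneg.1 (hcmp 0), sub_nonneg.1 (hcmp 1), sub_nonneg.1 (hcmp 2)⟩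

/-- Comparison for the SIR-SI fluid system: with the same underlying SIR trajectory
`(b,d)`, two controls `σ¹(t) ≥ σ²(t)` and equal initial conditions yield ordered
trajectories: `x_b¹ ≥ x_b²`, `x_d¹ ≥ x_d²`, `y¹ ≥ y²` for all `t ≥ 0`. -/
theorem stmt16 (β lam Γ : ℝ) (hβ : 0 < β) (hlam : 0 < lam) (hΓ : Γ ∈ Set.Icc (0:ℝ) 1)
    (σ1 σ2 : ℝ → ℝ)
    (hσ1 : ∀ t, σ1 t ∈ Set.Icc (0:ℝ) 1) (hσ2 : ∀ t, σ2 t ∈ Set.Icc (0:ℝ) 1)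
    (hσle : ∀ t, σ2 t ≤ σ1 t)
    (b d : ℝ → ℝ)
    (xb1 xd1 y1 xb2 xd2 y2 : ℝ → ℝ)
    (hxb1 : ∀ t ∈ Set.Ici (0:ℝ),
      HasDerivAt xb1 (β * xd1 t + lam * (b t - xb1 t) * (xb1 t + xd1 t + y1 t)) t)
    (hxd1 : ∀ t ∈ Set.Ici (0:ℝ),
      HasDerivAt xd1 (Γ * lam * (d t - xd1 t) * y1 t + Γ * lam * xd1 t * (1 - b t - d t) +
        lam * (d t - xd1 t) * (xb1 t + xd1 t + y1 t) - β * xd1 t) t)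
    (hy1 : ∀ t ∈ Set.Ici (0:ℝ),
      HasDerivAt y1 (-(Γ * lam * d t * y1 t) +
        lam * σ1 t * ((1 - b t - d t) - y1 t) * (xb1 t + y1 t + (1 - Γ) * xd1 t)) t)
    (hxb2 : ∀ t ∈ Set.Ici (0:ℝ),
      HasDerivAt xb2 (β * xd2 t + lam * (b t - xb2 t) * (xb2 t + xd2 t + y2 t)) t)
    (hxd2 : ∀ t ∈ Set.Ici (0:ℝ),
      HasDerivAt xd2 (Γ * lam * (d t - xd2 t) * y2 t + Γ * lam * xd2 t * (1 - b t - d t) +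
        lam * (d t - xd2 t) * (xb2 t + xd2 t + y2 t) - β * xd2 t) t)
    (hy2 : ∀ t ∈ Set.Ici (0:ℝ),
      HasDerivAt y2 (-(Γ * lam * d t * y2 t) +
        lam * σ2 t * ((1 - b t - d t) - y2 t) * (xb2 t + y2 t + (1 - Γ) * xd2 t)) t)
    (hregion1 : ∀ t ∈ Set.Ici (0:ℝ),
      0 ≤ xb1 t ∧ xb1 t ≤ b t ∧ 0 ≤ xd1 t ∧ xd1 t ≤ d t ∧
      0 ≤ y1 t ∧ y1 t ≤ 1 - b t - d t)
    (hregion2 : ∀ t ∈ Set.Ici (0:ℝ),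
      0 ≤ xb2 t ∧ xb2 t ≤ b t ∧ 0 ≤ xd2 t ∧ xd2 t ≤ d t ∧
      0 ≤ y2 t ∧ y2 t ≤ 1 - b t - d t)
    (hinit : xb1 0 = xb2 0 ∧ xd1 0 = xd2 0 ∧ y1 0 = y2 0) :
    ∀ t ∈ Set.Ici (0:ℝ), xb2 t ≤ xb1 t ∧ xd2 t ≤ xd1 t ∧ y2 t ≤ y1 t :=
  stmt16_general β lam Γ hβ hlam hΓ σ1 σ2 hσ2 hσle b d xb1 xd1 y1 xb2 xd2 y2 hxb1 hxd1 hy1 hxb2 hxd2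
    hy2 hregion1 hregion2 hinit
end
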